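/- arXiv:1106.3041 — 4 statements merged into one kernel-verified Lean document; each statement's English description precedes it below -/
import Mathlib

section
/- For a bipartite graph G with n vertices and m edges, the Laplacian Estrada index satisfies LEE(G) = n - m + e^2 · EE(L(G)), where L(G) is the line graph of G. -/
/-- The adjacency matrix of a graph (over `ℝ`) is Hermitian. -/
theorem adjMatrix_isHermitian {V : Type*} [Fintype V] [DecidableEq V] (G : SimpleGraph V)
    [DecidableRel G.Adj] : (G.adjMatrix ℝ).IsHermitian := by
  rw [Matrix.IsHermitian, Matrix.conjTranspose_eq_transpose_of_trivial]
  exact G.isSymm_adjMatrix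

/-- Laplacian Estrada index: the sum of `exp` over the Laplacian eigenvalues. -/
noncomputable def LEE {V : Type*} [Fintype V] [DecidableEq V] (G : SimpleGraph V) : ℝ :=
  letI := Classical.decRel G.Adj
  ∑ i : V, Real.exp ((SimpleGraph.posSemidef_lapMatrix ℝ G).1.eigenvalues i)

/-- Estrada index: the sum of `exp` over the adjacency eigenvalues. -/
noncomputable def EE {V : Type*} [Fintype V] [DecidableEq V] (G : SimpleGraph V) : ℝ :=
  letI := Classical.decRel G.Adj
  ∑ i : V, Real.exp ((adjMatrix_isHermitian G).eigenvalues i)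

/-!
Both sides are traces of matrix exponentials. For the vertex–edge incidence matrix `N` of `G`,
`N Nᵀ = D + A` is the signless Laplacian and `Nᵀ N = A(L(G)) + 2 I`. A proper 2-colouring gives a
diagonal `±1` matrix `S` with `S (D + A) S = D - A`, so the Laplacian and the signless Laplacian
have the same `tr ∘ exp`. Finally, for an `n × m` matrix `X` and an `m × n` matrix `Y`,
`tr (exp (X Y)) + m = tr (exp (Y X)) + n`: the exponential series agree termwise since
`tr ((X Y)ᵏ) = tr ((Y X)ᵏ)` for `k ≥ 1`, and the `k = 0` terms are the identities.
-/

open Matrix Finset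

namespace Matrix

variable {𝕂 : Type*} [RCLike 𝕂] {n m : Type*} [Fintype n] [DecidableEq n] [Fintype m]
  [DecidableEq m]

theorem trace_exp_conj {U : Matrix n n 𝕂} (hU : IsUnit U) (A : Matrix n n 𝕂) :
    (NormedSpace.exp (U * A * U⁻¹)).trace = (NormedSpace.exp A).trace := by
  rw [exp_conj U A hU, trace_conj hU]

theorem IsHermitian.trace_exp {A : Matrix n n 𝕂} (hA : A.IsHermitian) :
    (NormedSpace.exp A).trace = ∑ i, (Real.exp (hA.eigenvalues i) : 𝕂) := by
  set U : Matrix n n 𝕂 := (hA.eigenvectorUnitary : Matrix n n 𝕂)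
  have hinv : star U = U⁻¹ := (inv_eq_left_inv (Unitary.coe_star_mul_self _)).symm
  conv_lhs => rw [hA.spectral_theorem, Unitary.conjStarAlgAut_apply, hinv,
    trace_exp_conj Unitary.isUnit_coe, exp_diagonal, trace_diagonal]
  congr! with i
  rw [Real.exp_eq_exp_ℝ, ← RCLike.algebraMap_eq_ofReal, NormedSpace.algebraMap_exp_comm,
    Pi.exp_def]
  rfl

theorem trace_exp_add_smul_one (A : Matrix n n 𝕂) (c : 𝕂) :
    (NormedSpace.exp (A + c • 1)).trace = NormedSpace.exp c * (NormedSpace.exp A).trace := by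
  rw [exp_add_of_commute A _ ((Commute.one_right A).smul_right c), smul_one_eq_diagonal,
    exp_diagonal]
  simp [Pi.exp_def, ← smul_one_eq_diagonal, trace_smul]

theorem mul_pow_succ {α : Type*} [Semiring α] (X : Matrix n m α) (Y : Matrix m n α) (k : ℕ) :
    (X * Y) ^ (k + 1) = X * (Y * X) ^ k * Y := by
  induction k with
  | zero => simp
  | succ k ih =>
    rw [pow_succ, ih, pow_succ]
    simp only [Matrix.mul_assoc]

section

attribute [local instance] Matrix.linftyOpNormedRing Matrix.linftyOpNormedAlgebra

theorem hasSum_trace_exp (A : Matrix n n 𝕂) :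
    HasSum (fun k : ℕ => (k.factorial⁻¹ : 𝕂) * (A ^ k).trace) (NormedSpace.exp A).trace := by
  have h := (NormedSpace.expSeries_summable' (𝕂 := 𝕂) A).hasSum.mapL
    (traceLinearMap n 𝕂 𝕂).toContinuousLinearMap
  simp only [LinearMap.coe_toContinuousLinearMap', traceLinearMap_apply, trace_smul,
    smul_eq_mul] at h
  rwa [NormedSpace.exp_eq_tsum 𝕂]

end

theorem trace_exp_mul_comm (X : Matrix n m 𝕂) (Y : Matrix m n 𝕂) :
    (NormedSpace.exp (X * Y)).trace + Fintype.card m =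
      (NormedSpace.exp (Y * X)).trace + Fintype.card n := by
  have hXY := hasSum_trace_exp (X * Y)
  have hYX := hasSum_trace_exp (Y * X)
  have hpow (k : ℕ) : ((X * Y) ^ (k + 1)).trace = ((Y * X) ^ (k + 1)).trace := by
    rw [mul_pow_succ, Matrix.mul_assoc, trace_mul_comm, Matrix.mul_assoc, ← pow_succ]
  rw [← hXY.tsum_eq, ← hYX.tsum_eq, hXY.summable.tsum_eq_zero_add, hYX.summable.tsum_eq_zero_add]
  simp only [hpow, pow_zero, trace_one, Nat.factorial_zero, Nat.cast_one, inv_one, one_mul]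
  ring

end Matrix

theorem Sym2.card_filter_mem_and_mem_le_one {V : Type*} [Fintype V] [DecidableEq V]
    {z₁ z₂ : Sym2 V} (hne : z₁ ≠ z₂) : #{v | v ∈ z₁ ∧ v ∈ z₂} ≤ 1 := by
  refine card_le_one.mpr fun v hv w hw => ?_
  by_contra hvw
  simp only [mem_filter, mem_univ, true_and] at hv hw
  exact hne (((mem_and_mem_iff hvw).mp ⟨hv.1, hw.1⟩).trans
    ((mem_and_mem_iff hvw).mp ⟨hv.2, hw.2⟩).symm)

namespace SimpleGraph

variable (R : Type*) {V : Type*} [DecidableEq V] (G : SimpleGraph V) [DecidableRel G.Adj]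

def signlessLapMatrix [Fintype V] [AddMonoidWithOne R] : Matrix V V R :=
  G.degMatrix R + G.adjMatrix R

def edgeIncMatrix [Zero R] [One R] : Matrix V G.edgeSet R :=
  (G.incMatrix R).submatrix id (↑)

variable {R}

theorem edgeIncMatrix_apply [Zero R] [One R] (v : V) (e : G.edgeSet) :
    G.edgeIncMatrix R v e = if v ∈ (e : Sym2 V) then 1 else 0 := by
  simp [edgeIncMatrix, incMatrix_apply', incidenceSet, e.2]

variable [Fintype V]

theorem edgeIncMatrix_mul_transpose [Semiring R] :
    G.edgeIncMatrix R * (G.edgeIncMatrix R)ᵀ = G.signlessLapMatrix R := by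
  have hrestrict :
      G.edgeIncMatrix R * (G.edgeIncMatrix R)ᵀ = G.incMatrix R * (G.incMatrix R)ᵀ := by
    ext v w
    simp only [mul_apply, transpose_apply, edgeIncMatrix, submatrix_apply, id]
    rw [Finset.sum_set_coe (f := fun e => G.incMatrix R v e * G.incMatrix R w e)]
    refine Finset.sum_subset (subset_univ _) fun e _ he => ?_
    rw [G.incMatrix_of_notMem_incidenceSet fun h => he (Set.mem_toFinset.mpr h.1), zero_mul]
  rw [hrestrict, incMatrix_mul_transpose]
  ext v w
  by_cases hvw : v = w
  · subst hvw
    simp [signlessLapMatrix, degMatrix]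
  · simp [signlessLapMatrix, degMatrix, hvw, adjMatrix_apply]

theorem transpose_edgeIncMatrix_mul [Semiring R] [DecidableRel G.lineGraph.Adj] :
    (G.edgeIncMatrix R)ᵀ * G.edgeIncMatrix R = G.lineGraph.adjMatrix R + (2 : R) • 1 := by
  ext e f
  by_cases hef : e = f
  · subst hef
    have := G.incMatrix_transpose_mul_diag (R := R) (e := (e : Sym2 V))
    simp_all [edgeIncMatrix, mul_apply, e.2]
  · have hcard := Sym2.card_filter_mem_and_mem_le_one (Subtype.coe_ne_coe.mpr hef)
    simp only [mul_apply, transpose_apply, edgeIncMatrix_apply, ite_zero_mul_ite_zero, one_mul,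
      sum_boole, Matrix.add_apply, adjMatrix_apply, lineGraph_adj_iff_exists, Matrix.smul_apply,
      one_apply_ne hef, smul_zero, add_zero, ne_eq, hef, not_false_eq_true, true_and]
    split_ifs with hcommon
    · obtain ⟨v, hv⟩ := hcommon
      have hpos : 0 < #{v | v ∈ (e : Sym2 V) ∧ v ∈ (f : Sym2 V)} :=
        card_pos.mpr ⟨v, by simpa using hv⟩
      rw [le_antisymm hcard hpos, Nat.cast_one]
    · rw [card_eq_zero.mpr (filter_eq_empty_iff.mpr fun v _ hv => hcommon ⟨v, hv⟩),
        Nat.cast_zero]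

theorem diagonal_mul_signlessLapMatrix_mul_diagonal [CommRing R] (c : G.Coloring (Fin 2)) :
    diagonal (fun v => (-1 : R) ^ (c v : ℕ)) * G.signlessLapMatrix R *
      diagonal (fun v => (-1 : R) ^ (c v : ℕ)) = G.lapMatrix R := by
  ext v w
  simp only [diagonal_mul, mul_diagonal, signlessLapMatrix, lapMatrix, Matrix.add_apply,
    Matrix.sub_apply, degMatrix, adjMatrix_apply]
  by_cases hvw : v = w
  · subst hvw
    simp [mul_right_comm _ _ ((-1 : R) ^ (c v : ℕ)), ← mul_pow]
  · by_cases hadj : G.Adj v w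
    · have hsum : (c v : ℕ) + c w = 1 := by
        have := Fin.val_ne_of_ne (c.valid hadj)
        omega
      simp [hvw, hadj, ← pow_add, hsum]
    · simp [hvw, hadj]

theorem trace_exp_lapMatrix_eq_signlessLapMatrix {𝕂 : Type*} [RCLike 𝕂]
    (c : G.Coloring (Fin 2)) :
    (NormedSpace.exp (G.lapMatrix 𝕂)).trace = (NormedSpace.exp (G.signlessLapMatrix 𝕂)).trace := by
  set S : Matrix V V 𝕂 := diagonal fun v => (-1 : 𝕂) ^ (c v : ℕ)
  have hSS : S * S = 1 := by
    simp [S, diagonal_mul_diagonal, ← mul_pow]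
  rw [← trace_exp_conj (IsUnit.of_mul_eq_one S hSS) (G.signlessLapMatrix 𝕂),
    inv_eq_left_inv hSS, diagonal_mul_signlessLapMatrix_mul_diagonal]

theorem LEE_eq_trace_exp :
    LEE G = (NormedSpace.exp (G.lapMatrix ℝ)).trace := by
  rw [(G.isHermitian_lapMatrix ℝ).trace_exp, LEE]
  simp only [RCLike.ofReal_real_eq_id, id]
  congr!

theorem EE_eq_trace_exp :
    EE G = (NormedSpace.exp (G.adjMatrix ℝ)).trace := by
  rw [(G.isHermitian_adjMatrix ℝ).trace_exp, EE]
  simp only [RCLike.ofReal_real_eq_id, id]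
  congr!

end SimpleGraph

/-- For a bipartite graph `G` with `n` vertices and `m` edges,
`LEE G = n - m + e² · EE(L(G))` where `L(G)` is the line graph of `G`. -/
theorem lee_eq_of_bipartite {V : Type*} [Fintype V] [DecidableEq V]
    (G : SimpleGraph V) [DecidableRel G.Adj] (hbip : G.Colorable 2) :
    LEE G = (Fintype.card V : ℝ) - (G.edgeFinset.card : ℝ) +
      Real.exp 2 * EE G.lineGraph := by
  obtain ⟨c⟩ := hbip
  classical
  have htrace := trace_exp_mul_comm (G.edgeIncMatrix ℝ) (G.edgeIncMatrix ℝ)ᵀ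
  rw [G.edgeIncMatrix_mul_transpose, G.transpose_edgeIncMatrix_mul, trace_exp_add_smul_one,
    ← G.trace_exp_lapMatrix_eq_signlessLapMatrix c, ← Real.exp_eq_exp_ℝ] at htrace
  rw [G.LEE_eq_trace_exp, G.lineGraph.EE_eq_trace_exp, G.edgeFinset_card]
  linarith
end

section
/- For real n > 0 and 2 ≤ a ≤ n/2 - 1, the cubic f_{n,a}(x) = x^3 - (n+2)x^2 + (n+2+a(n-a))x - n satisfies f_{n,a}(n - a + 3/2) = 15/8 + a^2 + n + n^2/2 - 11a/4 - 3na/2 > 0. -/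
/-- For real `n > 0` and `2 ≤ a ≤ n/2 - 1`, the cubic
`f(x) = x³ - (n+2)x² + (n+2+a(n-a))x - n` satisfies
`f(n - a + 3/2) = 15/8 + a² + n + n²/2 - 11a/4 - 3na/2 > 0`. -/
theorem f_at_n_sub_a_add_threehalves (n a : ℝ) (hn : 0 < n) (ha : 2 ≤ a)
    (han : a ≤ n / 2 - 1) :
    (fun x : ℝ => x ^ 3 - (n + 2) * x ^ 2 + (n + 2 + a * (n - a)) * x - n) (n - a + 3 / 2)
      = 15 / 8 + a ^ 2 + n + n ^ 2 / 2 - 11 * a / 4 - 3 * n * a / 2 ∧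
    0 < 15 / 8 + a ^ 2 + n + n ^ 2 / 2 - 11 * a / 4 - 3 * n * a / 2 := by
  constructor
  · ring
  · nlinarith [sq_nonneg (n / 2 - 1 - a), sq_nonneg (a - 2), sq_nonneg n]
end

section
/- For n > 5 and 2 ≤ a ≤ n/2 - 1, the polynomial f_{n,a}(x) = x^3 - (n+2)x^2 + (n+2+a(n-a))x - n has three real roots x_3 ∈ [0,1], x_2 ∈ [a, a+1], and x_1 ∈ [n-a+1, n-a+3/2]. -/
/-- For real `n > 5` and `2 ≤ a ≤ n/2 - 1`, the cubic
`f(x) = x³ - (n+2)x² + (n+2+a(n-a))x - n` has three real roots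
`x₃ ∈ [0,1]`, `x₂ ∈ [a, a+1]`, and `x₁ ∈ [n-a+1, n-a+3/2]`. -/
theorem f_has_three_roots (n a : ℝ) (hn : 5 < n) (ha : 2 ≤ a) (han : a ≤ n / 2 - 1) :
    ∃ x₁ x₂ x₃ : ℝ,
      x₃ ∈ Set.Icc (0 : ℝ) 1 ∧
      x₂ ∈ Set.Icc a (a + 1) ∧
      x₁ ∈ Set.Icc (n - a + 1) (n - a + 3 / 2) ∧
      (∀ x ∈ ({x₁, x₂, x₃} : Set ℝ),
        x ^ 3 - (n + 2) * x ^ 2 + (n + 2 + a * (n - a)) * x - n = 0) := by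
  set f : ℝ → ℝ := fun x => x ^ 3 - (n + 2) * x ^ 2 + (n + 2 + a * (n - a)) * x - n with hf
  have hcont : Continuous f := by unfold f; continuity
  have h3 : (0 : ℝ) ∈ Set.Icc (f 0) (f 1) := by
    constructor
    · simp only [hf]; nlinarith
    · simp only [hf]
      nlinarith [mul_nonneg (show (0:ℝ) ≤ a - 1 by linarith)
        (show (0:ℝ) ≤ n - a - 1 by linarith)]
  obtain ⟨x₃, hx₃, hfx₃⟩ := intermediate_value_Icc (by norm_num) hcont.continuousOn h3
  have h2 : (0 : ℝ) ∈ Set.Icc (f (a + 1)) (f a) := by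
    constructor
    · simp only [hf]; nlinarith
    · simp only [hf]
      nlinarith [mul_nonneg (show (0:ℝ) ≤ n - 2 * a by linarith)
        (show (0:ℝ) ≤ a - 1 by linarith)]
  obtain ⟨x₂, hx₂, hfx₂⟩ := intermediate_value_Icc' (by linarith) hcont.continuousOn h2
  have h1 : (0 : ℝ) ∈ Set.Icc (f (n - a + 1)) (f (n - a + 3 / 2)) := by
    constructor
    · simp only [hf]; nlinarith
    · simp only [hf]
      nlinarith [mul_nonneg (show (0:ℝ) ≤ n - a by linarith)
        (show (0:ℝ) ≤ n - 2 * a - 2 by linarith)]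
  obtain ⟨x₁, hx₁, hfx₁⟩ := intermediate_value_Icc (by linarith) hcont.continuousOn h1
  refine ⟨x₁, x₂, x₃, hx₃, hx₂, hx₁, ?_⟩
  intro x hx
  rcases hx with rfl | rfl | rfl
  · simpa [hf] using hfx₁
  · simpa [hf] using hfx₂
  · simpa [hf] using hfx₃
end

section
/- For all real n ≥ 6 and all real a with 0 < a ≤ n/2 - 1, one has 1 + e^a + e^{n-a+1} > e + e^{a+2} + e^{n-a+1/2}. -/
set_option maxHeartbeats 800000


/-- For all real `n ≥ 6` and all real `a` with `0 < a ≤ n/2 - 1`,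
`1 + eᵃ + e^{n-a+1} > e + e^{a+2} + e^{n-a+1/2}`. -/
theorem one_add_exp_gt (n a : ℝ) (hn : 6 ≤ n) (ha : 0 < a) (han : a ≤ n / 2 - 1) :
    1 + Real.exp a + Real.exp (n - a + 1) >
      Real.exp 1 + Real.exp (a + 2) + Real.exp (n - a + 1 / 2) := by
  set e1 := Real.exp 1 with he1
  set s := Real.exp (1/2) with hsdef
  have hs0 : (0:ℝ) < s := Real.exp_pos _
  have hsq : s * s = e1 := by rw [hsdef, he1, ← Real.exp_add]; norm_num
  have helb : 2.7182818 < e1 := Real.exp_one_gt_d9.trans_le' (by norm_num)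
  have heub : e1 < 2.7182819 := Real.exp_one_lt_d9.trans_le (by norm_num)
  have hsl : 1.6487 < s := by nlinarith
  have hsu : s < 1.6488 := by nlinarith
  set x := Real.exp a with hx
  set y := Real.exp (n - a) with hy
  set z := Real.exp (n / 2) with hz
  have hx0 : (0:ℝ) < x := Real.exp_pos _
  have hy0 : (0:ℝ) < y := Real.exp_pos _
  have hz0 : (0:ℝ) < z := Real.exp_pos _
  have h1 : Real.exp (n - a + 1) = y * e1 := by rw [Real.exp_add]
  have h2 : Real.exp (a + 2) = x * (e1 * e1) := by
    rw [hx, ← Real.exp_add, ← Real.exp_add]; norm_num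
  have h3 : Real.exp (n - a + 1/2) = y * s := by rw [Real.exp_add]
  have hxz : x * e1 ≤ z := by
    rw [hx, he1, ← Real.exp_add]
    exact Real.exp_le_exp.mpr (by linarith)
  have hyz : z * e1 ≤ y := by
    rw [hz, he1, ← Real.exp_add]
    exact Real.exp_le_exp.mpr (by linarith)
  have hz3 : Real.exp 3 ≤ z := Real.exp_le_exp.mpr (by linarith)
  have he3 : Real.exp 3 = e1 * e1 * e1 := by rw [he1, ← Real.exp_add, ← Real.exp_add]; norm_num
  have hzlb : 20 ≤ z := by nlinarith
  have hx1 : 1 < x := by rw [hx, ← Real.exp_zero]; exact Real.exp_lt_exp.mpr ha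
  rw [h1, h2, h3]
  have hes : (0:ℝ) < e1 - s := by linarith
  have he1sq : e1 * e1 < 7.39 := by nlinarith
  have hc : (3/2:ℝ) ≤ e1 * e1 * (e1 - s) - e1 * e1 + 1 := by nlinarith
  have P1 : x * e1 * (e1 * e1 - 1) ≤ z * (e1 * e1 - 1) :=
    mul_le_mul_of_nonneg_right hxz (by nlinarith)
  have P2 : z * e1 * ((e1 - s) * e1) ≤ y * ((e1 - s) * e1) :=
    mul_le_mul_of_nonneg_right hyz (by positivity)
  have P3 : z * (3/2) ≤ z * (e1 * e1 * (e1 - s) - e1 * e1 + 1) :=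
    mul_le_mul_of_nonneg_left hc (le_of_lt hz0)
  have he1pos : (0:ℝ) < e1 := by linarith
  have key : 0 < e1 * ((1 + x + y * e1) - (e1 + x * (e1 * e1) + y * s)) := by
    linarith [P1, P2, P3, hzlb, he1sq, helb]
  nlinarith [key, he1pos]
end
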